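/- For any p > 0 with p ≠ 1, sup_{x∈ℝ} |Φ(px) - Φ(x)| ≤ min( √((p-1)·ln p / π), (max(p, 1/p) - 1)/√(2πe) ), where Φ is the standard normal CDF. -/

import Mathlib

/-!
Write `|Φ(px) - Φ(x)|` as `∫_a^{ka} φ` with `a = min(p, 1)|x|` and `k = max(p, 1/p)`.
Since `φ` decreases on `[0, ∞)`, this is at most `(k - 1) · aφ(a) ≤ (k - 1)/√(2πe)`.
AM–GM on `φ(t) = √(1/t) · √(tφ(t)²)`, with `tφ(t)² = (-φ(t)²/2)'`, bounds it by `√(log k/(4π))`.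
The smaller of the two bounds is at most `√((k - 1) log k/(kπ)) ≤ √((p - 1) log p/π)`:
the first one when `k ≥ 4/3`, the second one when `k < 4/3`.
-/

open MeasureTheory Real

noncomputable def stdNormalCDF (x : ℝ) : ℝ :=
  ∫ t in Set.Iic x, Real.exp (-t ^ 2 / 2) / Real.sqrt (2 * Real.pi)

open Set intervalIntegral

noncomputable def stdNormalPDF (t : ℝ) : ℝ := exp (-t ^ 2 / 2) / √(2 * π)

lemma stdNormalPDF_pos (t : ℝ) : 0 < stdNormalPDF t := by
  unfold stdNormalPDF; positivity

lemma stdNormalPDF_neg (t : ℝ) : stdNormalPDF (-t) = stdNormalPDF t := by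
  simp [stdNormalPDF]

lemma stdNormalPDF_sq (t : ℝ) : stdNormalPDF t ^ 2 = exp (-t ^ 2) / (2 * π) := by
  rw [stdNormalPDF, div_pow, sq_sqrt (by positivity), ← exp_nat_mul]
  ring_nf

lemma stdNormalPDF_sq_le (t : ℝ) : stdNormalPDF t ^ 2 ≤ (2 * π)⁻¹ := by
  rw [stdNormalPDF_sq, div_eq_mul_inv]
  exact mul_le_of_le_one_left (by positivity) (exp_le_one_iff.2 (by nlinarith))

lemma antitoneOn_stdNormalPDF : AntitoneOn stdNormalPDF (Ici 0) := by
  intro s hs t _ hst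
  unfold stdNormalPDF
  gcongr

lemma continuous_stdNormalPDF : Continuous stdNormalPDF := by
  unfold stdNormalPDF; fun_prop

lemma hasDerivAt_stdNormalPDF (t : ℝ) :
    HasDerivAt stdNormalPDF (-t * stdNormalPDF t) t := by
  have h : HasDerivAt (fun t : ℝ => -t ^ 2 / 2) (-t) t := by
    simpa using ((hasDerivAt_pow 2 t).neg.div_const 2).congr_deriv (by ring)
  exact (h.exp.div_const (√(2 * π))).congr_deriv (by unfold stdNormalPDF; ring)

lemma integrable_stdNormalPDF : Integrable stdNormalPDF := by
  have h := (integrable_exp_neg_mul_sq (by norm_num : (0 : ℝ) < 1 / 2)).div_const (√(2 * π))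
  convert h using 2 with t
  rw [stdNormalPDF]; ring_nf

lemma stdNormalCDF_sub_stdNormalCDF (a b : ℝ) :
    stdNormalCDF b - stdNormalCDF a = ∫ t in a..b, stdNormalPDF t :=
  integral_Iic_sub_Iic integrable_stdNormalPDF.integrableOn integrable_stdNormalPDF.integrableOn

lemma integral_stdNormalPDF_neg (a b : ℝ) :
    ∫ t in (-b)..(-a), stdNormalPDF t = ∫ t in a..b, stdNormalPDF t := by
  simp only [← integral_comp_neg, stdNormalPDF_neg]

lemma abs_integral_stdNormalPDF (a b : ℝ) :
    |∫ t in a..b, stdNormalPDF t| = ∫ t in min a b..max a b, stdNormalPDF t := by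
  rw [abs_integral_eq_abs_integral_uIoc, integral_of_le min_le_max, uIoc,
    abs_of_nonneg (setIntegral_nonneg measurableSet_Ioc fun t _ => (stdNormalPDF_pos t).le)]

lemma max_one_eq_max_inv_mul_min_one {p : ℝ} (hp : 0 < p) :
    max p 1 = max p p⁻¹ * min p 1 := by
  rcases le_total 1 p with h | h
  · rw [max_eq_left h, min_eq_right h, max_eq_left ((inv_le_one_of_one_le₀ h).trans h), mul_one]
  · rw [max_eq_right h, min_eq_left h, max_eq_right (h.trans (one_le_inv₀ hp |>.2 h)),
      inv_mul_cancel₀ hp.ne']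

lemma abs_stdNormalCDF_mul_sub {p : ℝ} (hp : 0 < p) (x : ℝ) :
    |stdNormalCDF (p * x) - stdNormalCDF x|
      = ∫ t in min p 1 * |x|..max p p⁻¹ * (min p 1 * |x|), stdNormalPDF t := by
  have h : |stdNormalCDF (p * x) - stdNormalCDF x| = |∫ t in |x|..p * |x|, stdNormalPDF t| := by
    rw [stdNormalCDF_sub_stdNormalCDF]
    rcases le_total 0 x with hx | hx
    · rw [abs_of_nonneg hx]
    · rw [abs_of_nonpos hx, ← integral_stdNormalPDF_neg, integral_symm, abs_neg]
      ring_nf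
  rw [h, abs_integral_stdNormalPDF, ← mul_assoc, ← max_one_eq_max_inv_mul_min_one hp,
    min_mul_of_nonneg _ _ (abs_nonneg x), max_mul_of_nonneg _ _ (abs_nonneg x), one_mul,
    min_comm, max_comm]

lemma integral_mul_stdNormalPDF_sq (a b : ℝ) :
    ∫ t in a..b, t * stdNormalPDF t ^ 2 = (stdNormalPDF a ^ 2 - stdNormalPDF b ^ 2) / 2 := by
  have hderiv (t : ℝ) : HasDerivAt (fun t => -stdNormalPDF t ^ 2 / 2) (t * stdNormalPDF t ^ 2) t :=
    (((hasDerivAt_stdNormalPDF t).pow 2).neg.div_const 2).congr_deriv (by ring)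
  rw [integral_eq_sub_of_hasDerivAt (fun t _ => hderiv t)
    ((continuous_id.mul (continuous_stdNormalPDF.pow 2)).intervalIntegrable a b)]
  ring

lemma integral_stdNormalPDF_le_sub_mul {a b : ℝ} (ha : 0 ≤ a) (hab : a ≤ b) :
    ∫ t in a..b, stdNormalPDF t ≤ (b - a) * stdNormalPDF a := by
  calc ∫ t in a..b, stdNormalPDF t ≤ ∫ _ in a..b, stdNormalPDF a :=
        integral_mono_on hab (continuous_stdNormalPDF.intervalIntegrable a b) intervalIntegrable_const
          fun t ht => antitoneOn_stdNormalPDF ha (ha.trans ht.1) ht.1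
    _ = (b - a) * stdNormalPDF a := by rw [intervalIntegral.integral_const, smul_eq_mul]

lemma mul_stdNormalPDF_le (t : ℝ) : t * stdNormalPDF t ≤ (√(2 * π * exp 1))⁻¹ := by
  -- `x + 1 ≤ exp x` at `x = (t² - 1) / 2`, together with `2t ≤ t² + 1`
  have ht : t ≤ exp ((t ^ 2 - 1) / 2) := by
    nlinarith [add_one_le_exp ((t ^ 2 - 1) / 2), sq_nonneg (t - 1)]
  calc t * stdNormalPDF t = t * exp (-t ^ 2 / 2) / √(2 * π) := mul_div_assoc' ..
    _ ≤ exp ((t ^ 2 - 1) / 2) * exp (-t ^ 2 / 2) / √(2 * π) := by gcongr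
    _ = (√(2 * π * exp 1))⁻¹ := by
      rw [← exp_add, sqrt_mul' (2 * π) (exp_pos 1).le, ← exp_half, mul_inv, ← exp_neg,
        div_eq_inv_mul]
      ring_nf

lemma integral_stdNormalPDF_le_sub_one {a k : ℝ} (ha : 0 ≤ a) (hk : 1 ≤ k) :
    ∫ t in a..k * a, stdNormalPDF t ≤ (k - 1) / √(2 * π * exp 1) := by
  calc ∫ t in a..k * a, stdNormalPDF t ≤ (k * a - a) * stdNormalPDF a :=
        integral_stdNormalPDF_le_sub_mul ha (le_mul_of_one_le_left ha hk)
    _ = (k - 1) * (a * stdNormalPDF a) := by ring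
    _ ≤ (k - 1) * (√(2 * π * exp 1))⁻¹ :=
          mul_le_mul_of_nonneg_left (mul_stdNormalPDF_le a) (by linarith)
    _ = (k - 1) / √(2 * π * exp 1) := rfl

lemma stdNormalPDF_le_inv_add_mul_sq {l t : ℝ} (hl : 0 < l) (ht : 0 < t) :
    stdNormalPDF t ≤ l / 2 * t⁻¹ + (2 * l)⁻¹ * (t * stdNormalPDF t ^ 2) := by
  have h : l / 2 * t⁻¹ + (2 * l)⁻¹ * (t * stdNormalPDF t ^ 2) - stdNormalPDF t
      = (l - t * stdNormalPDF t) ^ 2 / (2 * l * t) := by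
    field_simp
    ring
  rw [← sub_nonneg, h]
  positivity

lemma integral_stdNormalPDF_le_mul_log_add {a k l : ℝ} (ha : 0 < a) (hk : 1 ≤ k) (hl : 0 < l) :
    ∫ t in a..k * a, stdNormalPDF t ≤ l / 2 * log k + (8 * π * l)⁻¹ := by
  have hka : a ≤ k * a := le_mul_of_one_le_left ha.le hk
  have hpos : ∀ t ∈ uIcc a (k * a), 0 < t := fun t ht => ha.trans_le (by simpa [hka] using ht.1)
  have hinv : IntervalIntegrable (fun t => l / 2 * t⁻¹) volume a (k * a) :=
    (intervalIntegrable_inv (fun t ht => (hpos t ht).ne') continuousOn_id).const_mul _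
  have hsq : IntervalIntegrable (fun t => (2 * l)⁻¹ * (t * stdNormalPDF t ^ 2)) volume a (k * a) :=
    (continuous_const.mul (continuous_id.mul (continuous_stdNormalPDF.pow 2))).intervalIntegrable _ _
  calc ∫ t in a..k * a, stdNormalPDF t
      ≤ ∫ t in a..k * a, (l / 2 * t⁻¹ + (2 * l)⁻¹ * (t * stdNormalPDF t ^ 2)) :=
        integral_mono_on hka (continuous_stdNormalPDF.intervalIntegrable _ _) (hinv.add hsq)
          fun t ht => stdNormalPDF_le_inv_add_mul_sq hl (hpos t (Icc_subset_uIcc ht))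
    _ = l / 2 * log k + (2 * l)⁻¹ * ((stdNormalPDF a ^ 2 - stdNormalPDF (k * a) ^ 2) / 2) := by
      rw [integral_add hinv hsq, intervalIntegral.integral_const_mul,
        intervalIntegral.integral_const_mul,
        integral_inv_of_pos ha (ha.trans_le hka), mul_div_cancel_right₀ _ ha.ne',
        integral_mul_stdNormalPDF_sq]
    _ ≤ l / 2 * log k + (2 * l)⁻¹ * ((2 * π)⁻¹ / 2) := by
      gcongr
      linarith [stdNormalPDF_sq_le a, sq_nonneg (stdNormalPDF (k * a))]
    _ = l / 2 * log k + (8 * π * l)⁻¹ := by ring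

lemma integral_stdNormalPDF_le_sqrt_log {a k : ℝ} (ha : 0 ≤ a) (hk : 1 ≤ k) :
    ∫ t in a..k * a, stdNormalPDF t ≤ √(log k / (4 * π)) := by
  rcases ha.eq_or_lt with rfl | ha
  · simp
  rcases hk.eq_or_lt with rfl | hk
  · simp
  set s := √(log k / (4 * π))
  have hlog : log k = 4 * π * s ^ 2 := by
    rw [sq_sqrt (by positivity [log_pos hk])]; field_simp
  have hs : 0 < s := by positivity [log_pos hk]
  -- `l = s / log k` makes the two terms of the bound equal
  calc ∫ t in a..k * a, stdNormalPDF t ≤ s / log k / 2 * log k + (8 * π * (s / log k))⁻¹ :=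
        integral_stdNormalPDF_le_mul_log_add ha hk.le (by positivity [log_pos hk])
    _ = s := by rw [hlog]; field_simp; ring

lemma min_sqrt_log_le {k : ℝ} (hk : 1 ≤ k) :
    min (√(log k / (4 * π))) ((k - 1) / √(2 * π * exp 1)) ≤ √((k - 1) * log k / k / π) := by
  have hk0 : 0 < k := zero_lt_one.trans_le hk
  have hlog : 0 ≤ log k := log_nonneg hk
  by_cases h : 4 / 3 ≤ k
  · refine (min_le_left _ _).trans (sqrt_le_sqrt ?_)
    calc log k / (4 * π) = k / 4 * log k / k / π := by field_simp
      _ ≤ (k - 1) * log k / k / π := by gcongr; linarith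
  · refine (min_le_right _ _).trans ?_
    rw [le_sqrt (div_nonneg (by linarith) (by positivity)) (by positivity), div_pow,
      sq_sqrt (by positivity)]
    have hk2 : k ^ 2 * π ≤ 2 * π * exp 1 := by
      have : k ^ 2 ≤ 2 * exp 1 := by nlinarith [add_one_le_exp 1]
      nlinarith [pi_pos]
    calc (k - 1) ^ 2 / (2 * π * exp 1) ≤ (k - 1) ^ 2 / (k ^ 2 * π) := by gcongr
      _ = (k - 1) * (1 - k⁻¹) / k / π := by field_simp
      _ ≤ (k - 1) * log k / k / π := by
        gcongr
        exact one_sub_inv_le_log_of_pos hk0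

lemma max_inv_sub_one_mul_log_div_le {p : ℝ} (hp : 0 < p) :
    (max p p⁻¹ - 1) * log (max p p⁻¹) / max p p⁻¹ ≤ (p - 1) * log p := by
  rcases le_total 1 p with h | h
  · rw [max_eq_left ((inv_le_one_of_one_le₀ h).trans h)]
    exact div_le_self (mul_nonneg (by linarith) (log_nonneg h)) h
  · rw [max_eq_right (h.trans ((one_le_inv₀ hp).2 h)), log_inv]
    exact le_of_eq (by field_simp; ring)

theorem sup_scale_stdNormalCDF_general (p : ℝ) (hp : 0 < p) :
    (⨆ x : ℝ, |stdNormalCDF (p * x) - stdNormalCDF x|) ≤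
      min (Real.sqrt ((p - 1) * Real.log p / Real.pi))
        ((max p p⁻¹ - 1) / Real.sqrt (2 * Real.pi * Real.exp 1)) := by
  set k := max p p⁻¹
  have hk : 1 ≤ k := by
    rcases le_total 1 p with h | h
    · exact h.trans (le_max_left _ _)
    · exact ((one_le_inv₀ hp).2 h).trans (le_max_right _ _)
  have hsqrt : min (√(log k / (4 * π))) ((k - 1) / √(2 * π * exp 1))
      ≤ √((p - 1) * log p / π) :=
    (min_sqrt_log_le hk).trans
      (sqrt_le_sqrt (div_le_div_of_nonneg_right (max_inv_sub_one_mul_log_div_le hp) pi_pos.le))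
  refine ciSup_le fun x => ?_
  have ha : 0 ≤ min p 1 * |x| := mul_nonneg (le_min hp.le zero_le_one) (abs_nonneg x)
  have hlog := integral_stdNormalPDF_le_sqrt_log ha hk
  have hlin := integral_stdNormalPDF_le_sub_one ha hk
  rw [abs_stdNormalCDF_mul_sub hp x]
  exact le_min ((le_min hlog hlin).trans hsqrt) hlin

theorem sup_scale_stdNormalCDF (p : ℝ) (hp : 0 < p) (hne : p ≠ 1) :
    (⨆ x : ℝ, |stdNormalCDF (p * x) - stdNormalCDF x|) ≤
      min (Real.sqrt ((p - 1) * Real.log p / Real.pi))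
        ((max p p⁻¹ - 1) / Real.sqrt (2 * Real.pi * Real.exp 1)) :=
  sup_scale_stdNormalCDF_general p hp
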